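/- arXiv:math/0412217 — 4 statements merged into one kernel-verified Lean document; each statement's English description precedes it below -/
import Mathlib

section
/- For t ≥ 1 set d_t = ⌊3(t−1)/5⌋, and for r ≥ 9 define the polynomial f(x_1, ..., x_r) = (1 + x_1 + x_2) ∏_{t=3}^{r} (1 + x_t) − ∑_{t=1}^{r} x_t + x_1 x_2 − ∑_{t=3}^{r} ∑_{i=1}^{d_t} x_i x_t + x_1 x_2 ∑_{t=3}^{8} x_t − x_1 x_3 ∑_{t=9}^{r} x_t + x_1 x_2 ∑_{t=6}^{r} ∑_{i=3}^{d_t} x_i x_t (where empty sums are 0). Then f is monotone on nonnegative arguments: if 0 ≤ x_t ≤ y_t for all t ∈ {1, ..., r}, then f(x_1, ..., x_r) ≤ f(y_1, ..., y_r). -/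
/-!
Put `P = ∏_{t=3}^{r} (1 + x_t) = 1 + e₁ + e₂ + R`, where `e₁, e₂` are the first two elementary
symmetric polynomials of `x_3, …, x_r` and `R = ∑_{k ≥ 3} e_k`, and let
`E = ∑_{t} ∑_{3 ≤ i ≤ d_t} x_i x_t`, `B = ∑_{t=3}^{8} x_t`, `C = ∑_{t=9}^{r} x_t`. Expanding,
`f = 1 + (1 + x_1) R + (e₂ - E) + x_1 (e₂ - x_3 C) + x_2 (e₂ + R) + x_1 x_2 (1 + B + E)`
`+ x_2 x_3 + x_2 x_4`,
and each bracket is a sum of monomials: `e₂ - E` collects the `x_i x_t` with `d_t < i < t`, and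
`e₂ - x_3 C` those with `i < t` other than `x_3 x_t` for `t ≥ 9`. Functions that are nonnegative
and monotone on the nonnegative orthant are closed under sums and products, so `f` is monotone
there.
-/

/-- `d t = ⌊3(t−1)/5⌋`. -/
def guoSunD (t : ℕ) : ℕ := 3 * (t - 1) / 5

/-- The Guo–Sun polynomial
`f(x_1, …, x_r) = (1 + x_1 + x_2) ∏_{t=3}^{r} (1 + x_t) − ∑_{t=1}^{r} x_t + x_1 x_2`
`− ∑_{t=3}^{r} ∑_{i=1}^{d_t} x_i x_t + x_1 x_2 ∑_{t=3}^{8} x_t − x_1 x_3 ∑_{t=9}^{r} x_t`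
`+ x_1 x_2 ∑_{t=6}^{r} ∑_{i=3}^{d_t} x_i x_t`. -/
def guoSunF (r : ℕ) (x : ℕ → ℝ) : ℝ :=
  (1 + x 1 + x 2) * ∏ t ∈ Finset.Icc 3 r, (1 + x t)
    - ∑ t ∈ Finset.Icc 1 r, x t
    + x 1 * x 2
    - ∑ t ∈ Finset.Icc 3 r, ∑ i ∈ Finset.Icc 1 (guoSunD t), x i * x t
    + x 1 * x 2 * ∑ t ∈ Finset.Icc 3 8, x t
    - x 1 * x 3 * ∑ t ∈ Finset.Icc 9 r, x t
    + x 1 * x 2 * ∑ t ∈ Finset.Icc 6 r, ∑ i ∈ Finset.Icc 3 (guoSunD t), x i * x t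

open Finset

def MonotoneNonnegOn {ι : Type*} (s : Finset ι) (F : (ι → ℝ) → ℝ) : Prop :=
  ∀ ⦃x y : ι → ℝ⦄, (∀ t ∈ s, 0 ≤ x t ∧ x t ≤ y t) → 0 ≤ F x ∧ F x ≤ F y

namespace MonotoneNonnegOn

variable {ι : Type*} {s s' : Finset ι} {F G : (ι → ℝ) → ℝ}

theorem const {c : ℝ} (hc : 0 ≤ c) : MonotoneNonnegOn s fun _ => c :=
  fun _ _ _ => ⟨hc, le_rfl⟩

theorem apply {t : ι} (ht : t ∈ s) : MonotoneNonnegOn s fun x => x t :=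
  fun _ _ h => h t ht

theorem add (hF : MonotoneNonnegOn s F) (hG : MonotoneNonnegOn s G) :
    MonotoneNonnegOn s fun x => F x + G x := fun _ _ h =>
  ⟨add_nonneg (hF h).1 (hG h).1, add_le_add (hF h).2 (hG h).2⟩

theorem mul (hF : MonotoneNonnegOn s F) (hG : MonotoneNonnegOn s G) :
    MonotoneNonnegOn s fun x => F x * G x := fun _ _ h =>
  ⟨mul_nonneg (hF h).1 (hG h).1, mul_le_mul (hF h).2 (hG h).2 (hG h).1 ((hF h).1.trans (hF h).2)⟩

theorem sum {κ : Type*} {I : Finset κ} {F : κ → (ι → ℝ) → ℝ}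
    (hF : ∀ k ∈ I, MonotoneNonnegOn s (F k)) : MonotoneNonnegOn s fun x => ∑ k ∈ I, F k x :=
  fun _ _ h => ⟨sum_nonneg fun k hk => (hF k hk h).1, sum_le_sum fun k hk => (hF k hk h).2⟩

theorem mono (hF : MonotoneNonnegOn s F) (hs : s ⊆ s') : MonotoneNonnegOn s' F :=
  fun _ _ h => hF fun t ht => h t (hs ht)

theorem sum_apply {I : Finset ι} (hI : I ⊆ s) : MonotoneNonnegOn s fun x => ∑ i ∈ I, x i :=
  sum fun _ hi => apply (hI hi)

theorem sum_mul_sum_apply {I : Finset ι} {J : ι → Finset ι} (hI : I ⊆ s)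
    (hJ : ∀ t ∈ I, J t ⊆ s) : MonotoneNonnegOn s fun x => ∑ t ∈ I, x t * ∑ i ∈ J t, x i :=
  sum fun t ht => (apply (hI ht)).mul (sum_apply (hJ t ht))

theorem congr (hF : MonotoneNonnegOn s F) (h : ∀ x, F x = G x) : MonotoneNonnegOn s G :=
  funext h ▸ hF

end MonotoneNonnegOn

section PairSum

variable {ι : Type*} [LinearOrder ι]

/-- The second elementary symmetric polynomial of `(x t)_{t ∈ s}`. -/
def pairSum (s : Finset ι) (x : ι → ℝ) : ℝ :=
  ∑ t ∈ s, x t * ∑ i ∈ s with i < t, x i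

theorem pairSum_insert_of_lt {s : Finset ι} {a : ι} (ha : ∀ i ∈ s, i < a) (x : ι → ℝ) :
    pairSum (insert a s) x = pairSum s x + x a * ∑ i ∈ s, x i := by
  have has : a ∉ s := fun h => lt_irrefl a (ha a h)
  have hlt : ∀ t ∈ s, {i ∈ insert a s | i < t} = {i ∈ s | i < t} := fun t ht => by
    rw [filter_insert, if_neg (ha t ht).not_gt]
  have htop : {i ∈ insert a s | i < a} = s := by
    rw [filter_insert, if_neg (lt_irrefl a), filter_true_of_mem ha]
  rw [pairSum, pairSum, sum_insert has, htop, add_comm]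
  exact congrArg (· + _) (sum_congr rfl fun t ht => by rw [hlt t ht])

open MonotoneNonnegOn in
theorem monotoneNonnegOn_prod_one_add_sub_one (s : Finset ι) :
    MonotoneNonnegOn s fun x => ∏ t ∈ s, (1 + x t) - 1 := by
  induction s using Finset.induction_on_max with
  | empty => simpa using const le_rfl
  | insert a s ha ih =>
    have has : a ∉ s := fun h => lt_irrefl a (ha a h)
    have hs := subset_insert a s
    refine congr (((const zero_le_one).add (apply (mem_insert_self a s))).mul (ih.mono hs) |>.add
      (apply (mem_insert_self a s))) fun x => ?_
    rw [prod_insert has]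
    ring

open MonotoneNonnegOn in
theorem monotoneNonnegOn_prod_one_add_sub_one_sub_sum (s : Finset ι) :
    MonotoneNonnegOn s fun x => ∏ t ∈ s, (1 + x t) - 1 - ∑ t ∈ s, x t := by
  induction s using Finset.induction_on_max with
  | empty => simpa using const le_rfl
  | insert a s ha ih =>
    have has : a ∉ s := fun h => lt_irrefl a (ha a h)
    have hs := subset_insert a s
    refine congr ((ih.mono hs).add ((apply (mem_insert_self a s)).mul
      ((monotoneNonnegOn_prod_one_add_sub_one s).mono hs))) fun x => ?_
    rw [prod_insert has, sum_insert has]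
    ring

open MonotoneNonnegOn in
theorem monotoneNonnegOn_prod_one_add_sub_one_sub_sum_sub_pairSum (s : Finset ι) :
    MonotoneNonnegOn s fun x => ∏ t ∈ s, (1 + x t) - 1 - ∑ t ∈ s, x t - pairSum s x := by
  induction s using Finset.induction_on_max with
  | empty => simpa [pairSum] using const le_rfl
  | insert a s ha ih =>
    have has : a ∉ s := fun h => lt_irrefl a (ha a h)
    have hs := subset_insert a s
    refine congr ((ih.mono hs).add ((apply (mem_insert_self a s)).mul
      ((monotoneNonnegOn_prod_one_add_sub_one_sub_sum s).mono hs))) fun x => ?_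
    rw [prod_insert has, sum_insert has, pairSum_insert_of_lt ha]
    ring

end PairSum

theorem sum_Icc_consecutive {M : Type*} [AddCommMonoid M] (f : ℕ → M) {a b c : ℕ}
    (hab : a ≤ b + 1) (hbc : b ≤ c) :
    ∑ i ∈ Icc a c, f i = ∑ i ∈ Icc a b, f i + ∑ i ∈ Icc (b + 1) c, f i := by
  rw [← Ico_add_one_right_eq_Icc, ← Ico_add_one_right_eq_Icc, ← Ico_add_one_right_eq_Icc,
    sum_Ico_consecutive f hab (by omega)]

theorem pairSum_Icc (a b : ℕ) (x : ℕ → ℝ) :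
    pairSum (Icc a b) x = ∑ t ∈ Icc a b, x t * ∑ i ∈ Ico a t, x i :=
  sum_congr rfl fun t ht => by
    congr 2
    ext i
    simp only [mem_filter, mem_Icc, mem_Ico] at ht ⊢
    omega

section GuoSun

variable (x : ℕ → ℝ) {r : ℕ}

theorem sum_Icc_one_guoSunD {t : ℕ} (ht : 3 ≤ t) :
    ∑ i ∈ Icc 1 (guoSunD t), x i
      = x 1 + (if 5 ≤ t then x 2 else 0) + ∑ i ∈ Icc 3 (guoSunD t), x i := by
  split_ifs with h5
  · rw [sum_Icc_consecutive x (b := 2) (by omega) (by unfold guoSunD; omega)]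
    simp [sum_Icc_succ_top]
  · have hd : guoSunD t = 1 := by unfold guoSunD; omega
    simp [hd]

theorem sum_sum_Icc_one_guoSunD :
    ∑ t ∈ Icc 3 r, ∑ i ∈ Icc 1 (guoSunD t), x i * x t
      = x 1 * ∑ t ∈ Icc 3 r, x t + x 2 * ∑ t ∈ Icc 5 r, x t
        + ∑ t ∈ Icc 3 r, x t * ∑ i ∈ Icc 3 (guoSunD t), x i := by
  have h5 : {t ∈ Icc 3 r | 5 ≤ t} = Icc 5 r := by
    ext t; simp only [mem_filter, mem_Icc]; omega
  simp_rw [← sum_mul]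
  rw [sum_congr rfl fun t ht => by rw [sum_Icc_one_guoSunD x (mem_Icc.1 ht).1],
    ← h5, sum_filter, mul_sum, mul_sum, ← sum_add_distrib, ← sum_add_distrib]
  refine sum_congr rfl fun t _ => ?_
  split_ifs <;> ring

theorem sum_sum_Icc_three_guoSunD :
    ∑ t ∈ Icc 6 r, ∑ i ∈ Icc 3 (guoSunD t), x i * x t
      = ∑ t ∈ Icc 3 r, x t * ∑ i ∈ Icc 3 (guoSunD t), x i := by
  refine sum_subset (Icc_subset_Icc_left (by norm_num)) (fun t ht ht6 => ?_) |>.trans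
    (sum_congr rfl fun t _ => by rw [mul_sum]; exact sum_congr rfl fun _ _ => mul_comm _ _)
  simp only [mem_Icc, not_and, not_le] at ht ht6
  rw [Icc_eq_empty (by unfold guoSunD; omega), sum_empty]

theorem pairSum_Icc_three_split_guoSunD :
    pairSum (Icc 3 r) x = ∑ t ∈ Icc 3 r, x t * ∑ i ∈ Icc 3 (guoSunD t), x i
      + ∑ t ∈ Icc 3 r, x t * ∑ i ∈ Ico 3 t \ Icc 3 (guoSunD t), x i := by
  rw [pairSum_Icc, ← sum_add_distrib]
  refine sum_congr rfl fun t ht => ?_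
  have hsub : Icc 3 (guoSunD t) ⊆ Ico 3 t := by
    intro i; simp only [mem_Icc, mem_Ico] at ht ⊢; unfold guoSunD; omega
  rw [← mul_add, add_comm, sum_sdiff hsub]

theorem pairSum_Icc_three_split_nine (hr : 8 ≤ r) :
    pairSum (Icc 3 r) x = x 3 * ∑ t ∈ Icc 9 r, x t
      + (∑ t ∈ Icc 3 8, x t * ∑ i ∈ Ico 3 t, x i + ∑ t ∈ Icc 9 r, x t * ∑ i ∈ Ico 4 t, x i) := by
  rw [pairSum_Icc, sum_Icc_consecutive _ (b := 8) (by norm_num) hr, mul_sum, add_left_comm,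
    ← sum_add_distrib]
  congr 1
  refine sum_congr rfl fun t ht => ?_
  rw [mem_Icc] at ht
  rw [sum_eq_sum_Ico_succ_bot (by omega)]
  ring

theorem guoSunF_eq (hr : 9 ≤ r) :
    guoSunF r x = 1
      + (1 + x 1) * (∏ t ∈ Icc 3 r, (1 + x t) - 1 - ∑ t ∈ Icc 3 r, x t - pairSum (Icc 3 r) x)
      + ∑ t ∈ Icc 3 r, x t * ∑ i ∈ Ico 3 t \ Icc 3 (guoSunD t), x i
      + x 1 * (∑ t ∈ Icc 3 8, x t * ∑ i ∈ Ico 3 t, x i + ∑ t ∈ Icc 9 r, x t * ∑ i ∈ Ico 4 t, x i)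
      + x 2 * (∏ t ∈ Icc 3 r, (1 + x t) - 1 - ∑ t ∈ Icc 3 r, x t)
      + x 1 * x 2 * (1 + ∑ t ∈ Icc 3 8, x t + ∑ t ∈ Icc 3 r, x t * ∑ i ∈ Icc 3 (guoSunD t), x i)
      + x 2 * x 3 + x 2 * x 4 := by
  have h12 : ∑ t ∈ Icc 1 r, x t = x 1 + x 2 + ∑ t ∈ Icc 3 r, x t := by
    rw [sum_Icc_consecutive x (b := 2) (by norm_num) (by omega)]
    simp [sum_Icc_succ_top]
  have h34 : ∑ t ∈ Icc 3 r, x t = x 3 + x 4 + ∑ t ∈ Icc 5 r, x t := by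
    rw [sum_Icc_consecutive x (b := 4) (by norm_num) (by omega)]
    simp [sum_Icc_succ_top]
  rw [guoSunF, h12, sum_sum_Icc_one_guoSunD, sum_sum_Icc_three_guoSunD]
  linear_combination pairSum_Icc_three_split_guoSunD x + x 1 * pairSum_Icc_three_split_nine x
    (by omega : 8 ≤ r) + x 2 * h34

open MonotoneNonnegOn in
theorem monotoneNonnegOn_guoSunF (hr : 9 ≤ r) : MonotoneNonnegOn (Icc 1 r) (guoSunF r) := by
  have hIcc {a b : ℕ} (ha : 1 ≤ a) (hb : b ≤ r) : Icc a b ⊆ Icc 1 r := Icc_subset_Icc ha hb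
  have hIco {a b : ℕ} (ha : 1 ≤ a) (hb : b ≤ r + 1) : Ico a b ⊆ Icc 1 r := by
    intro i; simp only [mem_Ico, mem_Icc]; omega
  have hx {t : ℕ} (h1 : 1 ≤ t) (hle : t ≤ r) : MonotoneNonnegOn (Icc 1 r) fun x => x t :=
    apply (mem_Icc.2 ⟨h1, hle⟩)
  have one : MonotoneNonnegOn (Icc 1 r) fun _ => 1 := const zero_le_one
  have hR := (monotoneNonnegOn_prod_one_add_sub_one_sub_sum_sub_pairSum (Icc 3 r)).mono
    (hIcc (by norm_num) le_rfl)
  have hQ := (monotoneNonnegOn_prod_one_add_sub_one_sub_sum (Icc 3 r)).mono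
    (hIcc (by norm_num) le_rfl)
  have hPairsE : MonotoneNonnegOn (Icc 1 r) fun x =>
      ∑ t ∈ Icc 3 r, x t * ∑ i ∈ Ico 3 t \ Icc 3 (guoSunD t), x i :=
    sum_mul_sum_apply (hIcc (by norm_num) le_rfl) fun t ht =>
      sdiff_subset.trans (hIco (by norm_num) (by rw [mem_Icc] at ht; omega))
  have hPairsC : MonotoneNonnegOn (Icc 1 r) fun x =>
      ∑ t ∈ Icc 3 8, x t * ∑ i ∈ Ico 3 t, x i + ∑ t ∈ Icc 9 r, x t * ∑ i ∈ Ico 4 t, x i :=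
    (sum_mul_sum_apply (hIcc (by norm_num) (by omega)) fun t ht =>
      hIco (by norm_num) (by rw [mem_Icc] at ht; omega)).add
    (sum_mul_sum_apply (hIcc (by norm_num) le_rfl) fun t ht =>
      hIco (by norm_num) (by rw [mem_Icc] at ht; omega))
  have hE : MonotoneNonnegOn (Icc 1 r) fun x =>
      ∑ t ∈ Icc 3 r, x t * ∑ i ∈ Icc 3 (guoSunD t), x i :=
    sum_mul_sum_apply (hIcc (by norm_num) le_rfl) fun t ht =>
      hIcc (by norm_num) (by rw [mem_Icc] at ht; unfold guoSunD; omega)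
  have hB : MonotoneNonnegOn (Icc 1 r) fun x => ∑ t ∈ Icc 3 8, x t :=
    sum_apply (hIcc (by norm_num) (by omega))
  have x1 := hx (t := 1) le_rfl (by omega)
  have x2 := hx (t := 2) one_le_two (by omega)
  have x3 := hx (t := 3) (by norm_num) (by omega)
  have x4 := hx (t := 4) (by norm_num) (by omega)
  refine congr ?_ fun x => (guoSunF_eq x hr).symm
  exact ((((((one.add ((one.add x1).mul hR)).add hPairsE).add (x1.mul hPairsC)).add
    (x2.mul hQ)).add ((x1.mul x2).mul ((one.add hB).add hE))).add (x2.mul x3)).add (x2.mul x4)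

end GuoSun

/-- For `r ≥ 9`, the polynomial `f` is monotone in each variable on nonnegative
arguments: if `0 ≤ x_t ≤ y_t` for all `t ∈ {1, …, r}`, then
`f(x_1, …, x_r) ≤ f(y_1, …, y_r)`. -/
theorem guoSunF_monotone
    (r : ℕ) (hr : 9 ≤ r) (x y : ℕ → ℝ)
    (hxy : ∀ t ∈ Finset.Icc 1 r, 0 ≤ x t ∧ x t ≤ y t) :
    guoSunF r x ≤ guoSunF r y :=
  (monotoneNonnegOn_guoSunF hr hxy).2
end

section
/- Suppose {a_s (mod n_s)}_{s=1}^k is an odd covering system with the moduli n_1, ..., n_k distinct, greater than one, and squarefree, and let p_1, ..., p_r be the distinct prime divisors of N = lcm(n_1, ..., n_k). Then ∏_{t=1}^{r} p_t/(p_t − 1) − ∑_{t=1}^{r} 1/(p_t − 1) ≥ 2. -/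
open Finset

lemma crt_exists (P : Finset ℕ) (hP : ∀ p ∈ P, p.Prime) (f : ∀ p : ↥P, ZMod p) :
    ∃ x : ℤ, ∀ i : ↥P, ((x : ZMod i)) = f i := by
  classical
  set a : ↥P → ℕ := fun i => (i : ℕ) with ha
  have cop : Pairwise (Function.onFun Nat.Coprime a) := by
    intro i j hij
    exact (Nat.coprime_primes (hP i i.2) (hP j j.2)).2 (fun h => hij (Subtype.ext h))
  haveI : NeZero (∏ i, a i) := ⟨Finset.prod_ne_zero_iff.2 fun i _ => (hP i i.2).ne_zero⟩
  obtain ⟨x, hx⟩ := ZMod.intCast_surjective ((ZMod.prodEquivPi a cop).symm f)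
  refine ⟨x, fun i => ?_⟩
  have h1 : (ZMod.prodEquivPi a cop) ((x : ℤ) : ZMod (∏ i, a i)) = f := by
    rw [hx, RingEquiv.apply_symm_apply]
  have h2 : (ZMod.prodEquivPi a cop) ((x : ℤ) : ZMod (∏ i, a i))
      = fun i => ((x : ℤ) : ZMod (a i)) := by
    rw [map_intCast]; rfl
  exact congrFun (h2.symm.trans h1) i

/-- **Berger–Felzenbaum–Fraenkel / Sun.** If `{a_s (mod n_s)}_{s=1}^k` is an odd
covering system with distinct squarefree moduli greater than one, and
`p_1, …, p_r` are the distinct prime divisors of `N = lcm(n_1, …, n_k)`, then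
`∏_t p_t/(p_t − 1) − ∑_t 1/(p_t − 1) ≥ 2`. -/
theorem odd_squarefree_covering_product_inequality
    (k : ℕ) (a : Fin k → ℤ) (n : Fin k → ℕ)
    (hodd : ∀ s, Odd (n s))
    (hone : ∀ s, 1 < n s)
    (hsf : ∀ s, Squarefree (n s))
    (hinj : Function.Injective n)
    (hcov : ∀ x : ℤ, ∃ s, (n s : ℤ) ∣ x - a s) :
    2 ≤ ∏ p ∈ (Finset.univ.lcm n).primeFactors, (p : ℝ) / ((p : ℝ) - 1)
        - ∑ p ∈ (Finset.univ.lcm n).primeFactors, 1 / ((p : ℝ) - 1) := by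
  classical
  set N := Finset.univ.lcm n with hN
  set P := N.primeFactors with hPdef
  have hP : ∀ p ∈ P, p.Prime := fun p hp => Nat.prime_of_mem_primeFactors hp
  have hN0 : N ≠ 0 := by
    rw [hN, Ne, Finset.lcm_eq_zero_iff]
    rintro ⟨s, -, hs⟩
    have := hone s; omega
  haveI hinst : ∀ i : ↥P, NeZero ((i : ℕ)) := fun i => ⟨(hP i i.2).ne_zero⟩
  haveI hfact : ∀ i : ↥P, Fact (Nat.Prime (i : ℕ)) := fun i => ⟨hP i i.2⟩
  -- the prime support of each modulus
  set S : Fin k → Finset ℕ := fun s => (n s).primeFactors with hSdef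
  have hSsub : ∀ s, S s ⊆ P :=
    fun s => Nat.primeFactors_mono (Finset.dvd_lcm (mem_univ s)) hN0
  have hSprod : ∀ s, ∏ p ∈ S s, p = n s :=
    fun s => Nat.prod_primeFactors_of_squarefree (hsf s)
  have hSinj : Function.Injective S := by
    intro s t hst
    exact hinj (by rw [← hSprod s, ← hSprod t, hst])
  -- the forbidden residue for each prime
  set bad : ∀ p : ℕ, ZMod p := fun p =>
    if h : ∃ s, n s = p then ((a h.choose : ℤ) : ZMod p) else 0 with hbaddef
  have hbad : ∀ (s : Fin k) (p : ℕ), n s = p → bad p = ((a s : ℤ) : ZMod p) := by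
    intro s p hp
    subst hp
    have hex : ∃ t, n t = n s := ⟨s, rfl⟩
    rw [hbaddef]
    simp only [dif_pos hex]
    rw [hinj hex.choose_spec]
  -- the grid of non-forbidden points
  set G : Finset (∀ i : ↥P, ZMod i) := Fintype.piFinset (fun i => {bad i}ᶜ) with hGdef
  have cardG : G.card = ∏ p ∈ P, (p - 1) := by
    rw [hGdef, Fintype.card_piFinset]
    rw [← Finset.prod_coe_sort P (fun p => p - 1)]
    refine Finset.prod_congr rfl fun i _ => ?_
    rw [Finset.card_compl, Finset.card_singleton, ZMod.card]
  -- the covering sets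
  set F : Fin k → Finset (∀ i : ↥P, ZMod i) := fun s =>
    Fintype.piFinset (fun i => if (i : ℕ) ∈ S s then {((a s : ℤ) : ZMod i)} else {bad i}ᶜ)
    with hFdef
  have cardF : ∀ s, (F s).card = ∏ p ∈ P \ S s, (p - 1) := by
    intro s
    rw [hFdef, Fintype.card_piFinset]
    have : ∀ i : ↥P, (if (i : ℕ) ∈ S s then ({((a s : ℤ) : ZMod i)} : Finset (ZMod i))
        else {bad i}ᶜ).card = if (i : ℕ) ∈ S s then 1 else (i : ℕ) - 1 := by
      intro i
      split
      · rw [Finset.card_singleton]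
      · rw [Finset.card_compl, Finset.card_singleton, ZMod.card]
    rw [Finset.prod_congr rfl (fun i _ => this i)]
    rw [Finset.prod_coe_sort P (fun p => if p ∈ S s then 1 else p - 1)]
    rw [← Finset.prod_filter_mul_prod_filter_not P (· ∈ S s)]
    have h1 : ∏ p ∈ P.filter (· ∈ S s), (if p ∈ S s then 1 else p - 1) = 1 :=
      Finset.prod_eq_one (fun p hp => if_pos (Finset.mem_filter.1 hp).2)
    have h2 : P.filter (fun p => ¬ p ∈ S s) = P \ S s := by
      rw [Finset.sdiff_eq_filter]
    rw [h1, h2, one_mul]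
    exact Finset.prod_congr rfl fun p hp => if_neg (Finset.mem_sdiff.1 hp).2
  -- good indices
  set good : Finset (Fin k) := Finset.univ.filter (fun s => 2 ≤ (S s).card) with hgooddef
  -- covering
  have hGsub : G ⊆ good.biUnion F := by
    intro f hf
    have hf' : ∀ i : ↥P, f i ≠ bad i := by
      intro i
      have := (Fintype.mem_piFinset.1 hf) i
      simpa using this
    obtain ⟨x, hx⟩ := crt_exists P hP f
    obtain ⟨s, hs⟩ := hcov x
    have key : ∀ i : ↥P, (i : ℕ) ∈ S s → f i = ((a s : ℤ) : ZMod i) := by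
      intro i hi
      have hdvd : ((i : ℕ) : ℤ) ∣ x - a s :=
        dvd_trans (Int.natCast_dvd_natCast.2 (Nat.dvd_of_mem_primeFactors hi)) hs
      have : ((x - a s : ℤ) : ZMod i) = 0 := (ZMod.intCast_zmod_eq_zero_iff_dvd _ _).2 hdvd
      rw [Int.cast_sub, sub_eq_zero] at this
      rw [← hx i, this]
    -- the support has at least 2 elements
    have hcard2 : 2 ≤ (S s).card := by
      by_contra hlt
      push_neg at hlt
      interval_cases h : (S s).card
      · have := hSprod s
        rw [Finset.card_eq_zero.1 h, Finset.prod_empty] at this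
        have := hone s; omega
      · obtain ⟨p, hp⟩ := Finset.card_eq_one.1 h
        have hnp : n s = p := by
          rw [← hSprod s, hp, Finset.prod_singleton]
        have hpP : p ∈ P := hSsub s (hp ▸ Finset.mem_singleton_self p)
        have := key ⟨p, hpP⟩ (by rw [hp]; exact Finset.mem_singleton_self p)
        have hb := hbad s p hnp
        exact hf' ⟨p, hpP⟩ (by rw [this, hb])
    refine Finset.mem_biUnion.2 ⟨s, Finset.mem_filter.2 ⟨Finset.mem_univ s, hcard2⟩, ?_⟩
    rw [hFdef]
    refine Fintype.mem_piFinset.2 fun i => ?_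
    split
    · next hi => exact Finset.mem_singleton.2 (key i hi)
    · simpa using hf' i
  -- the counting inequality over ℕ
  have hcount : ∏ p ∈ P, (p - 1) ≤ ∑ s ∈ good, ∏ p ∈ P \ S s, (p - 1) := by
    calc ∏ p ∈ P, (p - 1) = G.card := cardG.symm
    _ ≤ (good.biUnion F).card := Finset.card_le_card hGsub
    _ ≤ ∑ s ∈ good, (F s).card := Finset.card_biUnion_le
    _ = ∑ s ∈ good, ∏ p ∈ P \ S s, (p - 1) := Finset.sum_congr rfl fun s _ => cardF s
  have hgood : ∀ s ∈ good, 2 ≤ (S s).card := fun s hs => (Finset.mem_filter.1 hs).2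
  set x : ℕ → ℝ := fun p => 1 / ((p : ℝ) - 1) with hxdef
  have hge1 : ∀ p ∈ P, (1 : ℝ) ≤ (p : ℝ) - 1 := by
    intro p hp
    have := (hP p hp).two_le
    have : (2 : ℝ) ≤ (p : ℝ) := by exact_mod_cast this
    linarith
  have hxnonneg : ∀ p ∈ P, 0 ≤ x p := by
    intro p hp
    have := hge1 p hp
    rw [hxdef]
    positivity
  have cast1 : ∀ T : Finset ℕ, T ⊆ P →
      ((∏ p ∈ T, (p - 1) : ℕ) : ℝ) = ∏ p ∈ T, ((p : ℝ) - 1) := by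
    intro T hT
    rw [Nat.cast_prod]
    exact Finset.prod_congr rfl fun p hp => Nat.cast_pred (hP p (hT hp)).pos
  have hprodpos : 0 < ∏ p ∈ P, ((p : ℝ) - 1) :=
    Finset.prod_pos fun p hp => lt_of_lt_of_le one_pos (hge1 p hp)
  -- step B
  have hcountR : ∏ p ∈ P, ((p : ℝ) - 1) ≤ ∑ s ∈ good, ∏ p ∈ P \ S s, ((p : ℝ) - 1) := by
    have := (Nat.cast_le (α := ℝ)).2 hcount
    rw [cast1 P le_rfl] at this
    rw [Nat.cast_sum] at this
    refine this.trans_eq (Finset.sum_congr rfl fun s _ => cast1 _ ?_)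
    exact (Finset.sdiff_subset).trans le_rfl
  have hsplit : ∀ s, ∏ p ∈ P \ S s, ((p : ℝ) - 1)
      = (∏ p ∈ P, ((p : ℝ) - 1)) * ∏ p ∈ S s, x p := by
    intro s
    have hsd : (∏ p ∈ P \ S s, ((p : ℝ) - 1)) * ∏ p ∈ S s, ((p : ℝ) - 1)
        = ∏ p ∈ P, ((p : ℝ) - 1) := Finset.prod_sdiff (hSsub s)
    have hpos : ∀ p ∈ S s, ((p : ℝ) - 1) ≠ 0 :=
      fun p hp => ne_of_gt (lt_of_lt_of_le one_pos (hge1 p (hSsub s hp)))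
    have hx1 : (∏ p ∈ S s, ((p : ℝ) - 1)) * ∏ p ∈ S s, x p = 1 := by
      rw [← Finset.prod_mul_distrib]
      exact Finset.prod_eq_one fun p hp => by
        have := hpos p hp
        rw [hxdef]; field_simp
    calc ∏ p ∈ P \ S s, ((p : ℝ) - 1)
        = (∏ p ∈ P \ S s, ((p : ℝ) - 1))
          * ((∏ p ∈ S s, ((p : ℝ) - 1)) * ∏ p ∈ S s, x p) := by rw [hx1, mul_one]
      _ = ((∏ p ∈ P \ S s, ((p : ℝ) - 1)) * ∏ p ∈ S s, ((p : ℝ) - 1))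
          * ∏ p ∈ S s, x p := by ring
      _ = (∏ p ∈ P, ((p : ℝ) - 1)) * ∏ p ∈ S s, x p := by rw [hsd]
  have key1 : 1 ≤ ∑ s ∈ good, ∏ p ∈ S s, x p := by
    have h2 : ∏ p ∈ P, ((p : ℝ) - 1)
        ≤ (∏ p ∈ P, ((p : ℝ) - 1)) * ∑ s ∈ good, ∏ p ∈ S s, x p := by
      rw [Finset.mul_sum]
      exact hcountR.trans_eq (Finset.sum_congr rfl fun s _ => hsplit s)
    nlinarith [hprodpos]
  -- step C : expansion
  have hexp : ∏ p ∈ P, (p : ℝ) / ((p : ℝ) - 1) = ∑ T ∈ P.powerset, ∏ p ∈ T, x p := by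
    have h1 : ∏ p ∈ P, (p : ℝ) / ((p : ℝ) - 1) = ∏ p ∈ P, (x p + 1) := by
      refine Finset.prod_congr rfl fun p hp => ?_
      have h := lt_of_lt_of_le one_pos (hge1 p hp)
      rw [hxdef]
      field_simp
      ring
    rw [h1, Finset.prod_add]
    exact Finset.sum_congr rfl fun T _ => by simp
  -- step D : split the powerset sum
  have hsplit2 : ∑ T ∈ P.powerset, ∏ p ∈ T, x p
      = (∑ T ∈ P.powerset.filter (fun T => T.card ≤ 1), ∏ p ∈ T, x p)
        + ∑ T ∈ P.powerset.filter (fun T => ¬ T.card ≤ 1), ∏ p ∈ T, x p :=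
    (Finset.sum_filter_add_sum_filter_not _ _ _).symm
  have hsmall : ∑ T ∈ P.powerset.filter (fun T => T.card ≤ 1), ∏ p ∈ T, x p
      = 1 + ∑ p ∈ P, x p := by
    have hset : P.powerset.filter (fun T => T.card ≤ 1)
        = insert ∅ (P.image (fun p => {p})) := by
      ext T
      simp only [Finset.mem_filter, Finset.mem_powerset, Finset.mem_insert, Finset.mem_image]
      constructor
      · rintro ⟨hTP, hc⟩
        interval_cases h : T.card
        · exact Or.inl (Finset.card_eq_zero.1 h)
        · obtain ⟨p, hp⟩ := Finset.card_eq_one.1 h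
          exact Or.inr ⟨p, hTP (hp ▸ Finset.mem_singleton_self p), hp.symm⟩
      · rintro (rfl | ⟨p, hp, rfl⟩)
        · simp
        · simp [hp]
    have hne : ∅ ∉ P.image (fun p => ({p} : Finset ℕ)) := by
      simp only [Finset.mem_image]
      rintro ⟨p, hp, h⟩
      exact (Finset.singleton_nonempty p).ne_empty h
    have hinj' : ∀ p ∈ P, ∀ q ∈ P, ({p} : Finset ℕ) = {q} → p = q :=
      fun p _ q _ h => Finset.mem_singleton.1 (h ▸ Finset.mem_singleton_self p)
    rw [hset, Finset.sum_insert hne, Finset.prod_empty, Finset.sum_image hinj']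
    simp
  have hbig : 1 ≤ ∑ T ∈ P.powerset.filter (fun T => ¬ T.card ≤ 1), ∏ p ∈ T, x p := by
    refine key1.trans ?_
    have himg : ∑ T ∈ good.image S, ∏ p ∈ T, x p = ∑ s ∈ good, ∏ p ∈ S s, x p :=
      Finset.sum_image (fun s _ t _ h => hSinj h)
    rw [← himg]
    refine Finset.sum_le_sum_of_subset_of_nonneg ?_ ?_
    · intro T hT
      obtain ⟨s, hs, rfl⟩ := Finset.mem_image.1 hT
      refine Finset.mem_filter.2 ⟨Finset.mem_powerset.2 (hSsub s), ?_⟩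
      have := hgood s hs
      omega
    · intro T hT _
      have hTP : T ⊆ P := Finset.mem_powerset.1 (Finset.mem_filter.1 hT).1
      exact Finset.prod_nonneg fun p hp => hxnonneg p (hTP hp)
  rw [hexp, hsplit2, hsmall]
  have : ∑ p ∈ P, 1 / ((p : ℝ) - 1) = ∑ p ∈ P, x p := rfl
  rw [this]
  linarith
end

section
/- Suppose {a_s (mod n_s)}_{s=1}^k is an odd covering system with 1 < n_1 < n_2 < ... < n_k, and let p_1, ..., p_r be the distinct prime divisors of N = lcm(n_1, ..., n_k). Then ∏_{t=1}^{r} (p_t − 1)/(p_t − 2) − ∑_{t=1}^{r} 1/(p_t − 2) > 2. -/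
open Finset

private lemma crt_exists_s15 (S : Finset ℕ) (Q : ℕ → ℕ)
    (hcop : ∀ p ∈ S, ∀ r ∈ S, p ≠ r → Nat.Coprime (Q p) (Q r)) (f : ℕ → ℕ) :
    ∃ z : ℕ, ∀ p ∈ S, z ≡ f p [MOD Q p] := by
  classical
  induction S using Finset.induction_on with
  | empty => exact ⟨0, by simp⟩
  | @insert p S hpS ih =>
    obtain ⟨z, hz⟩ := ih
      (fun p hp r hr hpr => hcop _ (mem_insert_of_mem hp) _ (mem_insert_of_mem hr) hpr)
    have hco : Nat.Coprime (Q p) (∏ r ∈ S, Q r) :=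
      Nat.Coprime.prod_right (fun r hr =>
        hcop _ (mem_insert_self _ _) _ (mem_insert_of_mem hr) (by rintro rfl; exact hpS hr))
    obtain ⟨hw1, hw2⟩ := (Nat.chineseRemainder hco (f p) z).prop
    refine ⟨(Nat.chineseRemainder hco (f p) z : ℕ), ?_⟩
    intro r hr
    rcases Finset.mem_insert.mp hr with rfl | hrS
    · exact hw1
    · exact (Nat.ModEq.of_dvd (Finset.dvd_prod_of_mem Q hrS) hw2).trans (hz r hrS)

private lemma geom_aux (c : ℝ) (A : ℕ) :
    ∑ b ∈ Finset.Icc 1 A, (c - 1) * c ^ (A - b) = c ^ A - 1 := by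
  induction A with
  | zero => simp
  | succ A ih =>
    have hins : Finset.Icc 1 (A+1) = insert (A+1) (Finset.Icc 1 A) := by
      ext x; simp only [Finset.mem_Icc, Finset.mem_insert]; omega
    have hcong : ∑ b ∈ Finset.Icc 1 A, (c - 1) * c ^ (A + 1 - b)
        = ∑ b ∈ Finset.Icc 1 A, c * ((c - 1) * c ^ (A - b)) := by
      refine Finset.sum_congr rfl (fun b hb => ?_)
      rw [Finset.mem_Icc] at hb
      rw [show A+1-b = (A-b)+1 by omega, pow_succ]
      ring
    rw [hins, Finset.sum_insert (by simp), hcong, ← Finset.mul_sum, ih]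
    simp only [Nat.sub_self, pow_zero, pow_succ]
    ring

private lemma mono_aux {ι : Type*} [DecidableEq ι] (S : Finset ι) (u v : ι → ℝ)
    (h0 : ∀ p ∈ S, 0 ≤ u p) (huv : ∀ p ∈ S, u p ≤ v p) :
    (∏ p ∈ S, (1 + u p)) - ∑ p ∈ S, u p ≤ (∏ p ∈ S, (1 + v p)) - ∑ p ∈ S, v p := by
  induction S using Finset.induction_on with
  | empty => simp
  | @insert p S hpS ih =>
    simp only [Finset.prod_insert hpS, Finset.sum_insert hpS]
    have h0' : ∀ q ∈ S, 0 ≤ u q := fun q hq => h0 q (mem_insert_of_mem hq)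
    have huv' : ∀ q ∈ S, u q ≤ v q := fun q hq => huv q (mem_insert_of_mem hq)
    have hu1 : (1:ℝ) ≤ ∏ q ∈ S, (1 + u q) := by
      calc (1:ℝ) = ∏ _q ∈ S, 1 := by simp
      _ ≤ ∏ q ∈ S, (1 + u q) :=
        Finset.prod_le_prod (by simp) (fun q hq => by linarith [h0' q hq])
    have hprodle : ∏ q ∈ S, (1+u q) ≤ ∏ q ∈ S, (1+v q) :=
      Finset.prod_le_prod (fun q hq => by linarith [h0' q hq])
        (fun q hq => by linarith [huv' q hq])
    have ihh := ih h0' huv'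
    have hup : 0 ≤ u p := h0 p (mem_insert_self _ _)
    have huvp : u p ≤ v p := huv p (mem_insert_self _ _)
    nlinarith [mul_nonneg (sub_nonneg.2 huvp) (sub_nonneg.2 hu1),
      mul_nonneg (le_trans hup huvp) (sub_nonneg.2 hprodle)]

private lemma card_dvd_filter_le (q d : ℕ) (hd : d ∣ q) (hq : q ≠ 0) (a : ℤ) :
    ((Finset.range q).filter (fun c : ℕ => (d:ℤ) ∣ (c:ℤ) - a)).card ≤ q / d := by
  classical
  have hd0 : d ≠ 0 := by rintro rfl; exact hq (zero_dvd_iff.mp hd)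
  have : ((Finset.range q).filter (fun c : ℕ => (d:ℤ) ∣ (c:ℤ) - a)).card
      ≤ (Finset.range (q / d)).card := by
    apply Finset.card_le_card_of_injOn (fun c => c / d)
    · intro c hc
      simp only [Finset.mem_coe, Finset.mem_filter, Finset.mem_range] at hc ⊢
      exact Nat.div_lt_div_of_lt_of_dvd hd hc.1
    · intro c1 h1 c2 h2 heq
      simp only [Finset.coe_filter, Set.mem_setOf_eq, Finset.mem_range] at h1 h2
      have hdvd : (d:ℤ) ∣ (c1:ℤ) - (c2:ℤ) := by
        have := dvd_sub h1.2 h2.2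
        have he : ((c1:ℤ) - a) - ((c2:ℤ) - a) = (c1:ℤ) - c2 := by ring
        rwa [he] at this
      have hmod : c2 % d = c1 % d := Nat.modEq_iff_dvd.mpr hdvd
      have heq' : c1 / d = c2 / d := heq
      calc c1 = d * (c1 / d) + c1 % d := (Nat.div_add_mod c1 d).symm
      _ = d * (c2 / d) + c2 % d := by rw [heq', hmod]
      _ = c2 := Nat.div_add_mod c2 d
  simpa using this

set_option maxHeartbeats 2000000 in
/-- **Berger–Felzenbaum–Fraenkel.** If `{a_s (mod n_s)}_{s=1}^k` is an odd
covering system with `1 < n_1 < ⋯ < n_k`, and `p_1, …, p_r` are the distinct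
prime divisors of `N = lcm(n_1, …, n_k)`, then
`∏_t (p_t − 1)/(p_t − 2) − ∑_t 1/(p_t − 2) > 2`. -/
theorem odd_covering_bff_inequality
    (k : ℕ) (a : Fin k → ℤ) (n : Fin k → ℕ)
    (hodd : ∀ s, Odd (n s))
    (hone : ∀ s, 1 < n s)
    (hmono : StrictMono n)
    (hcov : ∀ x : ℤ, ∃ s, (n s : ℤ) ∣ x - a s) :
    2 < ∏ p ∈ (Finset.univ.lcm n).primeFactors, ((p : ℝ) - 1) / ((p : ℝ) - 2)
        - ∑ p ∈ (Finset.univ.lcm n).primeFactors, 1 / ((p : ℝ) - 2) := by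
  classical
  have hn0 : ∀ s, n s ≠ 0 := fun s => by have := hone s; omega
  set N := Finset.univ.lcm n with hNdef
  have hNdvd : ∀ s, n s ∣ N := fun s => hNdef ▸ Finset.dvd_lcm (Finset.mem_univ s)
  have hN0 : N ≠ 0 := by
    intro h
    rw [hNdef] at h
    obtain ⟨s, -, hs0⟩ := Finset.lcm_eq_zero_iff.mp h
    exact hn0 s hs0
  set P := N.primeFactors with hPdef
  have hPp : ∀ p ∈ P, Nat.Prime p := fun p hp => Nat.prime_of_mem_primeFactors hp
  have hP3 : ∀ p ∈ P, 3 ≤ p := by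
    intro p hp
    have hpp := hPp p hp
    have hpd : p ∣ N := Nat.dvd_of_mem_primeFactors hp
    have hdvdprod : p ∣ ∏ s, n s :=
      hpd.trans (hNdef ▸ Finset.lcm_dvd fun s _ => Finset.dvd_prod_of_mem n (Finset.mem_univ s))
    obtain ⟨s, -, hps⟩ := (hpp.prime.dvd_finset_prod_iff n).mp hdvdprod
    have h2 := Nat.odd_iff.mp (hodd s)
    have hne2 : p ≠ 2 := by rintro rfl; obtain ⟨c, hc⟩ := hps; omega
    have := hpp.two_le
    omega
  set A : ℕ → ℕ := fun p => N.factorization p with hAdef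
  set Qf : ℕ → ℕ := fun p => p ^ A p with hQdef
  have hA1 : ∀ p ∈ P, 1 ≤ A p := by
    intro p hp
    exact (hPp p hp).factorization_pos_of_dvd hN0 (Nat.dvd_of_mem_primeFactors hp)
  have hQ0 : ∀ p ∈ P, Qf p ≠ 0 := by
    intro p hp
    have := hP3 p hp
    simp only [hQdef]
    positivity
  set β : Fin k → ℕ → ℕ := fun s p => (n s).factorization p with hβdef
  have hβle : ∀ (s : Fin k) (p : ℕ), p ∈ P → β s p ≤ A p := by
    intro s p _
    have hle : (n s).factorization ≤ N.factorization :=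
      (Nat.factorization_le_iff_dvd (hn0 s) hN0).mpr (hNdvd s)
    exact hle p
  have hβdvd : ∀ (s : Fin k) (p : ℕ), p ^ β s p ∣ n s := fun s p => Nat.ordProj_dvd (n s) p
  have hfac : ∀ s : Fin k, ∏ q ∈ (n s).primeFactors, q ^ β s q = n s := by
    intro s
    have h1 : (n s).factorization.prod (· ^ ·) = n s :=
      Nat.factorization_prod_pow_eq_self (hn0 s)
    rw [← Nat.support_factorization]
    exact h1
  have hprodn : ∀ s, n s = ∏ p ∈ P, p ^ β s p := by
    intro s
    refine (hfac s).symm.trans ?_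
    refine Finset.prod_subset (hPdef ▸ Nat.primeFactors_mono (hNdvd s) hN0) ?_
    intro p _ hnp
    have hz : β s p = 0 := by
      simp only [hβdef]
      exact Finsupp.notMem_support_iff.mp (by rwa [Nat.support_factorization])
    rw [hz, pow_zero]
  have hpure_eq : ∀ (p : ℕ) (s : Fin k), (n s).primeFactors = {p} → n s = p ^ β s p := by
    intro p s hps
    have h2 := hfac s
    rw [hps, Finset.prod_singleton] at h2
    exact h2.symm
  have hβ1 : ∀ (s : Fin k) (p : ℕ), p ∈ (n s).primeFactors → 1 ≤ β s p := by
    intro s p hp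
    exact (Nat.prime_of_mem_primeFactors hp).factorization_pos_of_dvd (hn0 s)
      (Nat.dvd_of_mem_primeFactors hp)
  set B : Fin k → ℕ → Finset ℕ := fun s p =>
    (Finset.range (Qf p)).filter (fun c : ℕ => ((p ^ β s p : ℕ) : ℤ) ∣ (c : ℤ) - a s) with hBdef
  set Pure : ℕ → Finset (Fin k) :=
    fun p => Finset.univ.filter (fun s => (n s).primeFactors = {p}) with hPuredef
  set V : ℕ → Finset ℕ :=
    fun p => Finset.range (Qf p) \ (Pure p).biUnion (fun s => B s p) with hVdef
  set NP : Finset (Fin k) :=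
    Finset.univ.filter (fun s => 2 ≤ (n s).primeFactors.card) with hNPdef
  have hcardB : ∀ (s : Fin k) (p : ℕ), p ∈ P → (B s p).card ≤ p ^ (A p - β s p) := by
    intro s p hp
    have h3 := hP3 p hp
    have hle := hβle s p hp
    have h := card_dvd_filter_le (Qf p) (p ^ β s p) (hQdef ▸ pow_dvd_pow p hle) (hQ0 p hp) (a s)
    calc (B s p).card ≤ Qf p / p ^ β s p := h
    _ = p ^ (A p - β s p) := by rw [hQdef]; exact Nat.pow_div hle (by omega)
  have hcardV : ∀ p ∈ P, Qf p ≤ (V p).card + ∑ b ∈ Finset.Icc 1 (A p), p ^ (A p - b) := by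
    intro p hp
    have hUsub : (Pure p).biUnion (fun s => B s p) ⊆ Finset.range (Qf p) := by
      intro c hc
      obtain ⟨s, -, hcs⟩ := Finset.mem_biUnion.mp hc
      exact Finset.filter_subset _ _ hcs
    have hVcard : (V p).card = Qf p - ((Pure p).biUnion (fun s => B s p)).card := by
      rw [hVdef]
      rw [Finset.card_sdiff_of_subset hUsub, Finset.card_range]
    have hUle : ((Pure p).biUnion (fun s => B s p)).card ≤ ∑ s ∈ Pure p, (B s p).card :=
      Finset.card_biUnion_le
    have hsum : ∑ s ∈ Pure p, (B s p).card ≤ ∑ b ∈ Finset.Icc 1 (A p), p ^ (A p - b) := by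
      have hinj : ∀ s1 ∈ Pure p, ∀ s2 ∈ Pure p, β s1 p = β s2 p → s1 = s2 := by
        intro s1 hs1 s2 hs2 hb
        apply hmono.injective
        rw [hpure_eq p s1 (Finset.mem_filter.mp hs1).2,
            hpure_eq p s2 (Finset.mem_filter.mp hs2).2, hb]
      calc ∑ s ∈ Pure p, (B s p).card ≤ ∑ s ∈ Pure p, p ^ (A p - β s p) :=
            Finset.sum_le_sum (fun s _ => hcardB s p hp)
      _ = ∑ b ∈ (Pure p).image (fun s => β s p), p ^ (A p - b) := by rw [Finset.sum_image hinj]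
      _ ≤ ∑ b ∈ Finset.Icc 1 (A p), p ^ (A p - b) := Finset.sum_le_sum_of_subset (by
            intro b hb
            obtain ⟨s, hs, rfl⟩ := Finset.mem_image.mp hb
            have hmem := (Finset.mem_filter.mp hs).2
            rw [Finset.mem_Icc]
            exact ⟨hβ1 s p (hmem ▸ Finset.mem_singleton_self p), hβle s p hp⟩)
    have hUle2 : ((Pure p).biUnion (fun s => B s p)).card ≤ Qf p := by
      calc _ ≤ (Finset.range (Qf p)).card := Finset.card_le_card hUsub
      _ = Qf p := Finset.card_range _
    omega
  have hcop : ∀ p ∈ P, ∀ r ∈ P, p ≠ r → Nat.Coprime (Qf p) (Qf r) := by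
    intro p hp r hr hne
    simp only [hQdef]
    exact Nat.Coprime.pow _ _ ((Nat.coprime_primes (hPp p hp) (hPp r hr)).mpr hne)
  have hsub : Fintype.piFinset (fun p : ↥P => V p.1) ⊆
      NP.biUnion (fun s => Fintype.piFinset (fun p : ↥P => V p.1 ∩ B s p.1)) := by
    intro x hx
    rw [Fintype.mem_piFinset] at hx
    have hxrange : ∀ p : ↥P, x p ∈ Finset.range (Qf p.1) := by
      intro p
      have := hx p
      rw [hVdef] at this
      exact (Finset.mem_sdiff.mp this).1
    obtain ⟨z, hz⟩ := crt_exists_s15 P Qf hcop (fun p => if h : p ∈ P then x ⟨p, h⟩ else 0)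
    obtain ⟨s, hs⟩ := hcov (z : ℤ)
    have hkey : ∀ p : ↥P, ((p.1 ^ β s p.1 : ℕ) : ℤ) ∣ (x p : ℤ) - a s := by
      intro p
      have h1 : ((p.1 ^ β s p.1 : ℕ) : ℤ) ∣ (z : ℤ) - a s :=
        dvd_trans (Int.natCast_dvd_natCast.mpr (hβdvd s p.1)) hs
      have hzp := hz p.1 p.2
      rw [dif_pos p.2] at hzp
      have h2 : ((Qf p.1 : ℕ) : ℤ) ∣ ((x p : ℕ) : ℤ) - (z : ℤ) := Nat.modEq_iff_dvd.mp hzp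
      have h2' : ((p.1 ^ β s p.1 : ℕ) : ℤ) ∣ ((x p : ℕ) : ℤ) - (z : ℤ) := by
        refine dvd_trans ?_ h2
        exact Int.natCast_dvd_natCast.mpr (hQdef ▸ pow_dvd_pow p.1 (hβle s p.1 p.2))
      have h3 := dvd_add h1 h2'
      have he : ((z : ℤ) - a s) + (((x p : ℕ) : ℤ) - (z : ℤ)) = ((x p : ℕ) : ℤ) - a s := by ring
      rwa [he] at h3
    rcases lt_or_ge ((n s).primeFactors.card) 2 with hc | hc
    · exfalso
      obtain ⟨p0, hp0⟩ := Finset.card_eq_one.mp (show (n s).primeFactors.card = 1 by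
        have := Finset.card_pos.mpr (Nat.nonempty_primeFactors.mpr (hone s)); omega)
      have hp0P : p0 ∈ P :=
        hPdef ▸ Nat.primeFactors_mono (hNdvd s) hN0 (hp0 ▸ Finset.mem_singleton_self p0)
      have hxV := hx ⟨p0, hp0P⟩
      rw [hVdef, Finset.mem_sdiff] at hxV
      refine hxV.2 (Finset.mem_biUnion.mpr ⟨s, ?_, ?_⟩)
      · rw [hPuredef]
        exact Finset.mem_filter.mpr ⟨Finset.mem_univ s, hp0⟩
      · rw [hBdef]
        exact Finset.mem_filter.mpr ⟨hxrange ⟨p0, hp0P⟩, hkey ⟨p0, hp0P⟩⟩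
    · refine Finset.mem_biUnion.mpr ⟨s, ?_, ?_⟩
      · rw [hNPdef]
        exact Finset.mem_filter.mpr ⟨Finset.mem_univ s, hc⟩
      · rw [Fintype.mem_piFinset]
        intro p
        refine Finset.mem_inter.mpr ⟨hx p, ?_⟩
        rw [hBdef]
        exact Finset.mem_filter.mpr ⟨hxrange p, hkey p⟩
  have hcount : ∏ p : ↥P, (V p.1).card ≤ ∑ s ∈ NP, ∏ p : ↥P, (V p.1 ∩ B s p.1).card := by
    have h1 : (Fintype.piFinset (fun p : ↥P => V p.1)).card ≤
        ∑ s ∈ NP, (Fintype.piFinset (fun p : ↥P => V p.1 ∩ B s p.1)).card :=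
      le_trans (Finset.card_le_card hsub) Finset.card_biUnion_le
    simpa only [Fintype.card_piFinset] using h1
  have hpR : ∀ p ∈ P, (3:ℝ) ≤ (p:ℝ) := fun p hp => by exact_mod_cast hP3 p hp
  set g : ℕ → ℕ → ℝ :=
    fun p b => if b = 0 then 1 else ((p:ℝ) - 1)/((p:ℝ)^b * ((p:ℝ) - 2)) with hgdef
  set G : Fin k → ℝ := fun s => ∏ p : ↥P, g p.1 (β s p.1) with hGdef
  set hh : ℕ → ℝ := fun p => ∑ b ∈ Finset.Icc 1 (A p), g p b with hhdef
  have hgpos : ∀ p ∈ P, ∀ b : ℕ, 0 < g p b := by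
    intro p hp b
    have h3 := hpR p hp
    simp only [hgdef]
    split
    · exact one_pos
    · exact div_pos (by linarith) (mul_pos (pow_pos (by linarith) _) (by linarith))
  have hrV : ∀ p ∈ P, (0:ℝ) < ((V p).card : ℝ) ∧
      (p:ℝ)^(A p) * ((p:ℝ) - 2) + 1 ≤ ((p:ℝ) - 1) * ((V p).card : ℝ) := by
    intro p hp
    have hc3 : (3:ℝ) ≤ (p:ℝ) := hpR p hp
    have hgeo := geom_aux (p:ℝ) (A p)
    have hcast : ((Qf p : ℕ) : ℝ) ≤ ((V p).card : ℝ) + ∑ b ∈ Finset.Icc 1 (A p), (p:ℝ)^(A p - b) := by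
      have h := hcardV p hp
      have h2 : ((Qf p : ℕ) : ℝ) ≤ (((V p).card + ∑ b ∈ Finset.Icc 1 (A p), p ^ (A p - b) : ℕ) : ℝ) := by
        exact_mod_cast h
      push_cast at h2
      exact h2
    have hQcast : ((Qf p : ℕ) : ℝ) = (p:ℝ)^(A p) := by
      rw [hQdef]; push_cast; ring
    have hT : ((p:ℝ) - 1) * ∑ b ∈ Finset.Icc 1 (A p), (p:ℝ)^(A p - b) = (p:ℝ)^(A p) - 1 := by
      rw [Finset.mul_sum, ← hgeo]
    have hmul := mul_le_mul_of_nonneg_left hcast (show (0:ℝ) ≤ (p:ℝ) - 1 by linarith)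
    have h2 : (p:ℝ)^(A p) * ((p:ℝ) - 2) + 1 ≤ ((p:ℝ) - 1) * ((V p).card : ℝ) := by
      nlinarith [hmul, hT, hQcast]
    have hpos : (0:ℝ) < ((V p).card : ℝ) := by
      nlinarith [h2, pow_pos (show (0:ℝ) < (p:ℝ) by linarith) (A p)]
    exact ⟨hpos, h2⟩
  have hWweak : ∀ (s : Fin k) (p : ℕ) (hp : p ∈ P),
      ((V p ∩ B s p).card : ℝ) ≤ g p (β s p) * ((V p).card : ℝ) := by
    intro s p hp
    rcases Nat.eq_zero_or_pos (β s p) with h0 | h1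
    · have : g p (β s p) = 1 := by simp only [hgdef, h0, if_pos]
      rw [this, one_mul]
      exact_mod_cast Finset.card_le_card (Finset.inter_subset_left : V p ∩ B s p ⊆ V p)
    · have hc3 : (3:ℝ) ≤ (p:ℝ) := hpR p hp
      obtain ⟨hV0, hV2⟩ := hrV p hp
      have hcardle : ((V p ∩ B s p).card : ℝ) ≤ (p:ℝ) ^ (A p - β s p) := by
        have h := le_trans (Finset.card_le_card (Finset.inter_subset_right : V p ∩ B s p ⊆ B s p)) (hcardB s p hp)
        exact_mod_cast h
      have hgval : g p (β s p) = ((p:ℝ) - 1)/((p:ℝ)^(β s p) * ((p:ℝ) - 2)) := by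
        simp only [hgdef, if_neg (by omega : ¬ β s p = 0)]
      have hpowpos : (0:ℝ) < (p:ℝ)^(β s p) * ((p:ℝ) - 2) :=
        mul_pos (pow_pos (by linarith) _) (by linarith)
      have hpowA : (p:ℝ)^(A p - β s p) * ((p:ℝ)^(β s p) * ((p:ℝ) - 2))
          = (p:ℝ)^(A p) * ((p:ℝ) - 2) := by
        rw [← mul_assoc, ← pow_add]
        rw [show A p - β s p + β s p = A p from by have := hβle s p hp; omega]
      have hlt : (p:ℝ)^(A p - β s p) * ((p:ℝ)^(β s p) * ((p:ℝ) - 2))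
          < ((p:ℝ) - 1) * ((V p).card : ℝ) := by
        rw [hpowA]; linarith
      calc ((V p ∩ B s p).card : ℝ) ≤ (p:ℝ)^(A p - β s p) := hcardle
      _ ≤ ((p:ℝ) - 1) * ((V p).card : ℝ) / ((p:ℝ)^(β s p) * ((p:ℝ) - 2)) :=
        le_of_lt ((lt_div_iff₀ hpowpos).mpr hlt)
      _ = g p (β s p) * ((V p).card : ℝ) := by rw [hgval]; ring
  have hWstrict : ∀ (s : Fin k) (p : ℕ) (hp : p ∈ P), 1 ≤ β s p →
      ((V p ∩ B s p).card : ℝ) < g p (β s p) * ((V p).card : ℝ) := by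
    intro s p hp h1
    have hc3 : (3:ℝ) ≤ (p:ℝ) := hpR p hp
    obtain ⟨hV0, hV2⟩ := hrV p hp
    have hcardle : ((V p ∩ B s p).card : ℝ) ≤ (p:ℝ) ^ (A p - β s p) := by
      have h := le_trans (Finset.card_le_card (Finset.inter_subset_right : V p ∩ B s p ⊆ B s p)) (hcardB s p hp)
      exact_mod_cast h
    have hgval : g p (β s p) = ((p:ℝ) - 1)/((p:ℝ)^(β s p) * ((p:ℝ) - 2)) := by
      simp only [hgdef, if_neg (by omega : ¬ β s p = 0)]
    have hpowpos : (0:ℝ) < (p:ℝ)^(β s p) * ((p:ℝ) - 2) :=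
      mul_pos (pow_pos (by linarith) _) (by linarith)
    have hpowA : (p:ℝ)^(A p - β s p) * ((p:ℝ)^(β s p) * ((p:ℝ) - 2))
        = (p:ℝ)^(A p) * ((p:ℝ) - 2) := by
      rw [← mul_assoc, ← pow_add]
      rw [show A p - β s p + β s p = A p from by have := hβle s p hp; omega]
    have hlt : (p:ℝ)^(A p - β s p) * ((p:ℝ)^(β s p) * ((p:ℝ) - 2))
        < ((p:ℝ) - 1) * ((V p).card : ℝ) := by
      rw [hpowA]; linarith
    calc ((V p ∩ B s p).card : ℝ) ≤ (p:ℝ)^(A p - β s p) := hcardle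
    _ < ((p:ℝ) - 1) * ((V p).card : ℝ) / ((p:ℝ)^(β s p) * ((p:ℝ) - 2)) :=
      (lt_div_iff₀ hpowpos).mpr hlt
    _ = g p (β s p) * ((V p).card : ℝ) := by rw [hgval]; ring
  have hGstrict : ∀ s ∈ NP, ∏ p : ↥P, ((V p.1 ∩ B s p.1).card : ℝ)
      < G s * ∏ p : ↥P, ((V p.1).card : ℝ) := by
    intro s hs
    obtain ⟨p0, hp0mem⟩ := Nat.nonempty_primeFactors.mpr (hone s)
    have hp0P : p0 ∈ P := hPdef ▸ Nat.primeFactors_mono (hNdvd s) hN0 hp0mem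
    have hβ1p0 : 1 ≤ β s p0 := hβ1 s p0 hp0mem
    have hGV : G s * ∏ p : ↥P, ((V p.1).card : ℝ)
        = ∏ p : ↥P, (g p.1 (β s p.1) * ((V p.1).card : ℝ)) := by
      rw [hGdef, ← Finset.prod_mul_distrib]
    set p0' : ↥P := ⟨p0, hp0P⟩ with hp0'def
    have hmem0 : p0' ∈ (Finset.univ : Finset ↥P) := Finset.mem_univ _
    rw [hGV, ← Finset.mul_prod_erase _ (fun p : ↥P => ((V p.1 ∩ B s p.1).card : ℝ)) hmem0,
        ← Finset.mul_prod_erase _ (fun p : ↥P => g p.1 (β s p.1) * ((V p.1).card : ℝ)) hmem0]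
    have hrest_le : ∏ p ∈ (Finset.univ : Finset ↥P).erase p0', ((V p.1 ∩ B s p.1).card : ℝ)
        ≤ ∏ p ∈ (Finset.univ : Finset ↥P).erase p0', (g p.1 (β s p.1) * ((V p.1).card : ℝ)) :=
      Finset.prod_le_prod (fun p _ => Nat.cast_nonneg _) (fun p _ => hWweak s p.1 p.2)
    have hrest_pos : (0:ℝ) < ∏ p ∈ (Finset.univ : Finset ↥P).erase p0',
        (g p.1 (β s p.1) * ((V p.1).card : ℝ)) :=
      Finset.prod_pos (fun p _ => mul_pos (hgpos p.1 p.2 _) (hrV p.1 p.2).1)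
    have h0le : (0:ℝ) ≤ ((V p0 ∩ B s p0).card : ℝ) := Nat.cast_nonneg _
    exact lt_of_le_of_lt (mul_le_mul_of_nonneg_left hrest_le h0le)
      (mul_lt_mul_of_pos_right (hWstrict s p0 hp0P hβ1p0) hrest_pos)
  have hprodVpos : (0:ℝ) < ∏ p : ↥P, ((V p.1).card : ℝ) :=
    Finset.prod_pos (fun p _ => (hrV p.1 p.2).1)
  have hcountR : ∏ p : ↥P, ((V p.1).card : ℝ)
      ≤ ∑ s ∈ NP, ∏ p : ↥P, ((V p.1 ∩ B s p.1).card : ℝ) := by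
    exact_mod_cast hcount
  have hNPne : NP.Nonempty := by
    rcases Finset.eq_empty_or_nonempty NP with h | h
    · exfalso
      rw [h, Finset.sum_empty] at hcountR
      linarith
    · exact h
  have hGsum : 1 < ∑ s ∈ NP, G s := by
    have h1 : ∑ s ∈ NP, ∏ p : ↥P, ((V p.1 ∩ B s p.1).card : ℝ)
        < ∑ s ∈ NP, G s * ∏ p : ↥P, ((V p.1).card : ℝ) :=
      Finset.sum_lt_sum_of_nonempty hNPne hGstrict
    rw [← Finset.sum_mul] at h1
    have h2 := lt_of_le_of_lt hcountR h1
    by_contra hcon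
    push_neg at hcon
    have := mul_le_mul_of_nonneg_right hcon (le_of_lt hprodVpos)
    rw [one_mul] at this
    linarith
  set E := Fintype.piFinset (fun p : ↥P => Finset.range (A p.1 + 1)) with hEdef
  set η : Fin k → (↥P → ℕ) := fun s p => β s p.1 with hηdef
  have hprodn' : ∀ s : Fin k, n s = ∏ p : ↥P, p.1 ^ β s p.1 := by
    intro s
    rw [hprodn s, ← Finset.prod_coe_sort P (fun p => p ^ β s p)]
  have hηinj : ∀ s1 ∈ NP, ∀ s2 ∈ NP, η s1 = η s2 → s1 = s2 := by
    intro s1 _ s2 _ hEq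
    apply hmono.injective
    rw [hprodn' s1, hprodn' s2]
    exact Finset.prod_congr rfl (fun p _ => by
      rw [show β s1 p.1 = β s2 p.1 from congrFun hEq p])
  set ψ : (Σ _p : ↥P, ℕ) → (↥P → ℕ) := fun t q => if q = t.1 then t.2 else 0 with hψdef
  set T := (Finset.univ : Finset ↥P).sigma (fun p => Finset.Icc 1 (A p.1)) with hTdef
  have hψinj : ∀ t1 ∈ T, ∀ t2 ∈ T, ψ t1 = ψ t2 → t1 = t2 := by
    rintro ⟨p1, b1⟩ ht1 ⟨p2, b2⟩ ht2 hEq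
    rw [hTdef, Finset.mem_sigma, Finset.mem_Icc] at ht1 ht2
    dsimp only at ht1 ht2
    by_cases hp : p1 = p2
    · subst hp
      have hb : b1 = b2 := by
        have := congrFun hEq p1
        simpa [hψdef] using this
      rw [hb]
    · exfalso
      have := congrFun hEq p1
      simp [hψdef, hp] at this
      omega
  have hgnonneg : ∀ (e : ↥P → ℕ), (0:ℝ) ≤ ∏ p : ↥P, g p.1 (e p) :=
    fun e => Finset.prod_nonneg (fun p _ => le_of_lt (hgpos p.1 p.2 _))
  have hsubE : {(fun _ => 0 : ↥P → ℕ)} ∪ T.image ψ ∪ NP.image η ⊆ E := by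
    intro e he
    rw [hEdef, Fintype.mem_piFinset]
    intro p
    rw [Finset.mem_range]
    rcases Finset.mem_union.mp he with he | he
    · rcases Finset.mem_union.mp he with he | he
      · rw [Finset.mem_singleton] at he
        subst he
        exact Nat.succ_pos _
      · obtain ⟨⟨q, b⟩, ht, rfl⟩ := Finset.mem_image.mp he
        rw [hTdef, Finset.mem_sigma, Finset.mem_Icc] at ht
        dsimp only at ht
        simp only [hψdef]
        split
        · rename_i hpq
          subst hpq
          omega
        · omega
    · obtain ⟨s, _, rfl⟩ := Finset.mem_image.mp he
      simp only [hηdef]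
      have := hβle s p.1 p.2
      omega
  have hd01 : Disjoint ({(fun _ => 0 : ↥P → ℕ)} : Finset (↥P → ℕ)) (T.image ψ) := by
    rw [Finset.disjoint_left]
    intro e he hei
    rw [Finset.mem_singleton] at he
    subst he
    obtain ⟨⟨q, b⟩, ht, hq⟩ := Finset.mem_image.mp hei
    rw [hTdef, Finset.mem_sigma, Finset.mem_Icc] at ht
    dsimp only at ht
    have := congrFun hq q
    simp [hψdef] at this
    omega
  have hpow_eq : ∀ (s : Fin k) (t : Σ _p : ↥P, ℕ), ψ t = η s → n s = t.1.1 ^ t.2 := by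
    rintro s ⟨q, b⟩ hEq
    rw [hprodn' s]
    have hcong : (∏ p : ↥P, p.1 ^ β s p.1) = ∏ p : ↥P, p.1 ^ (ψ ⟨q, b⟩ p) :=
      Finset.prod_congr rfl (fun p _ => by
        rw [show ψ ⟨q, b⟩ p = β s p.1 from by rw [hEq]])
    rw [hcong]
    rw [Finset.prod_eq_single q (fun r _ hr => by simp [hψdef, hr])
      (fun hq => absurd (Finset.mem_univ q) hq)]
    simp [hψdef]
  have hd02 : Disjoint ({(fun _ => 0 : ↥P → ℕ)} : Finset (↥P → ℕ)) (NP.image η) := by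
    rw [Finset.disjoint_left]
    intro e he hei
    rw [Finset.mem_singleton] at he
    subst he
    obtain ⟨s, _, hq⟩ := Finset.mem_image.mp hei
    have h1 : n s = ∏ p : ↥P, p.1 ^ β s p.1 := hprodn' s
    have h2 : ∏ p : ↥P, p.1 ^ β s p.1 = 1 := by
      apply Finset.prod_eq_one
      intro p _
      rw [show β s p.1 = 0 from congrFun hq p, pow_zero]
    have := hone s
    omega
  have hd12 : Disjoint (T.image ψ) (NP.image η) := by
    rw [Finset.disjoint_left]
    intro e he1 he2
    obtain ⟨⟨q, b⟩, ht, rfl⟩ := Finset.mem_image.mp he1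
    obtain ⟨s, hsNP, hq⟩ := Finset.mem_image.mp he2
    rw [hTdef, Finset.mem_sigma, Finset.mem_Icc] at ht
    dsimp only at ht
    have hns : n s = q.1 ^ b := hpow_eq s ⟨q, b⟩ hq.symm
    have hpf : (n s).primeFactors = {q.1} := by
      rw [hns]
      exact Nat.primeFactors_prime_pow (by omega) (hPp q.1 q.2)
    rw [hNPdef, Finset.mem_filter] at hsNP
    rw [hpf] at hsNP
    simp at hsNP
  have hrange_split : ∀ p ∈ P, ∑ b ∈ Finset.range (A p + 1), g p b = 1 + hh p := by
    intro p hp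
    rw [show Finset.range (A p + 1) = insert 0 (Finset.Icc 1 (A p)) by
      ext x; simp only [Finset.mem_range, Finset.mem_insert, Finset.mem_Icc]; omega]
    rw [Finset.sum_insert (by simp)]
    have h0 : g p 0 = 1 := by simp [hgdef]
    rw [h0, hhdef]
  have hsumE : ∑ e ∈ E, ∏ p : ↥P, g p.1 (e p) = ∏ p : ↥P, (1 + hh p.1) := by
    rw [hEdef, ← Finset.prod_univ_sum]
    exact Finset.prod_congr rfl (fun p _ => hrange_split p.1 p.2)
  have hsumT : ∑ e ∈ T.image ψ, ∏ p : ↥P, g p.1 (e p) = ∑ p : ↥P, hh p.1 := by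
    rw [Finset.sum_image hψinj, hTdef, Finset.sum_sigma]
    refine Finset.sum_congr rfl (fun p _ => ?_)
    simp only [hhdef]
    refine Finset.sum_congr rfl (fun b hb => ?_)
    rw [Finset.prod_eq_single p (fun r _ hr => by simp [hψdef, hgdef, hr])
      (fun h => absurd (Finset.mem_univ p) h)]
    simp [hψdef]
  have hsumNP : ∑ e ∈ NP.image η, ∏ p : ↥P, g p.1 (e p) = ∑ s ∈ NP, G s := by
    rw [Finset.sum_image hηinj]
  have hbig : 1 + (∑ p : ↥P, hh p.1) + ∑ s ∈ NP, G s ≤ ∏ p : ↥P, (1 + hh p.1) := by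
    have h1 : ∑ e ∈ {(fun _ => 0 : ↥P → ℕ)} ∪ T.image ψ ∪ NP.image η, ∏ p : ↥P, g p.1 (e p)
        ≤ ∑ e ∈ E, ∏ p : ↥P, g p.1 (e p) :=
      Finset.sum_le_sum_of_subset_of_nonneg hsubE (fun e _ _ => hgnonneg e)
    rw [Finset.sum_union (Finset.disjoint_union_left.mpr ⟨hd02, hd12⟩),
        Finset.sum_union hd01, Finset.sum_singleton] at h1
    rw [hsumT, hsumNP, hsumE] at h1
    have h0 : ∏ p : ↥P, g p.1 ((fun _ => (0:ℕ)) p) = 1 :=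
      Finset.prod_eq_one (fun p _ => by simp [hgdef])
    rw [h0] at h1
    linarith
  have hh_nonneg : ∀ p ∈ P, 0 ≤ hh p := by
    intro p hp
    simp only [hhdef]
    exact Finset.sum_nonneg (fun b _ => le_of_lt (hgpos p hp b))
  have hh_le : ∀ p ∈ P, hh p ≤ 1 / ((p:ℝ) - 2) := by
    intro p hp
    have hc3 : (3:ℝ) ≤ (p:ℝ) := hpR p hp
    have hgeo := geom_aux (p:ℝ) (A p)
    have hpowApos : (0:ℝ) < (p:ℝ)^(A p) := pow_pos (by linarith) _
    have hterm : ∀ b ∈ Finset.Icc 1 (A p), g p b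
        = ((p:ℝ) - 1) * (p:ℝ)^(A p - b) / ((p:ℝ)^(A p) * ((p:ℝ) - 2)) := by
      intro b hb
      rw [Finset.mem_Icc] at hb
      simp only [hgdef, if_neg (by omega : ¬ b = 0)]
      have hne2 : ((p:ℝ) - 2) ≠ 0 := by linarith
      have hppos : (0:ℝ) < (p:ℝ) := by linarith
      rw [div_eq_div_iff (mul_ne_zero (ne_of_gt (pow_pos hppos b)) hne2)
        (mul_ne_zero (ne_of_gt (pow_pos hppos (A p))) hne2)]
      have hpow : (p:ℝ)^(A p - b) * (p:ℝ)^b = (p:ℝ)^(A p) := by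
        rw [← pow_add]; congr 1; omega
      linear_combination (-((p:ℝ) - 1)) * ((p:ℝ) - 2) * hpow
    simp only [hhdef]
    rw [Finset.sum_congr rfl hterm, ← Finset.sum_div, hgeo]
    rw [div_le_div_iff₀ (mul_pos hpowApos (by linarith)) (by linarith : (0:ℝ) < (p:ℝ) - 2)]
    nlinarith [hpowApos, hc3]
  have hmain : 2 < (∏ p : ↥P, (1 + hh p.1)) - ∑ p : ↥P, hh p.1 := by
    linarith [hbig, hGsum]
  have hmono2 := mono_aux (Finset.univ : Finset ↥P) (fun p => hh p.1)
    (fun p => 1 / ((p.1:ℝ) - 2))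
    (fun p _ => hh_nonneg p.1 p.2) (fun p _ => hh_le p.1 p.2)
  have hfinal : 2 < (∏ p : ↥P, (1 + 1/((p.1:ℝ) - 2))) - ∑ p : ↥P, 1/((p.1:ℝ) - 2) := by
    linarith
  have hgoal1 : ∏ p : ↥P, (1 + 1/((p.1:ℝ) - 2)) = ∏ p ∈ P, ((p:ℝ) - 1)/((p:ℝ) - 2) := by
    rw [Finset.prod_coe_sort P (fun p => 1 + 1/((p:ℝ) - 2))]
    refine Finset.prod_congr rfl (fun p hp => ?_)
    have hc3 := hpR p hp
    have hne : (p:ℝ) - 2 ≠ 0 := by linarith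
    field_simp
    ring
  have hgoal2 : ∑ p : ↥P, (1/((p.1:ℝ) - 2)) = ∑ p ∈ P, 1/((p:ℝ) - 2) :=
    Finset.sum_coe_sort P (fun p => 1/((p:ℝ) - 2))
  rw [← hgoal1, ← hgoal2]
  exact hfinal
end

section
/- If {a_s (mod n_s)}_{s=1}^k is a covering system with 1 < n_1 < n_2 < ... < n_k, then it cannot cover every integer an odd number of times; that is, there exists an integer x such that the number of indices s ∈ {1, ..., k} with x ≡ a_s (mod n_s) is even. -/
open Polynomial Finset
open scoped Classical

private lemma sq_char_two {F : Type*} [Field F] [CharP F 2] (M : ℕ) :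
    ((X : F[X]) ^ M - 1) ^ 2 = X ^ (2 * M) - 1 := by
  have h2 : (2 : F[X]) = 0 := by
    have : ((2 : ℕ) : F[X]) = 0 := CharP.cast_eq_zero F[X] 2
    simpa using this
  rw [pow_mul']
  linear_combination ((1 : F[X]) - X ^ M) * h2

private lemma frob_pow {F : Type*} [Field F] [CharP F 2] (m e : ℕ) :
    ((X : F[X]) ^ m - 1) ^ 2 ^ e = X ^ (2 ^ e * m) - 1 := by
  induction e with
  | zero => simp
  | succ e ih =>
      rw [pow_succ, pow_mul, ih, sq_char_two]
      ring_nf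

private lemma rm_pow {F : Type*} [Field F] {f : F[X]} (hf : f ≠ 0) (α : F) (j : ℕ) :
    rootMultiplicity α (f ^ j) = j * rootMultiplicity α f := by
  induction j with
  | zero =>
      rw [pow_zero, show (1 : F[X]) = C 1 by simp, rootMultiplicity_C]
      simp
  | succ j ih =>
      rw [pow_succ, rootMultiplicity_mul (mul_ne_zero (pow_ne_zero _ hf) hf), ih]
      ring

private lemma rm_odd {F : Type*} [Field F] [CharP F 2] (α : F) {m : ℕ} (hm : Odd m) :
    rootMultiplicity α ((X : F[X]) ^ m - 1) = if α ^ m = 1 then 1 else 0 := by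
  have hmpos : 0 < m := hm.pos
  have hne : (X : F[X]) ^ m - 1 ≠ 0 := by
    simpa using X_pow_sub_C_ne_zero hmpos (1 : F)
  by_cases h : α ^ m = 1
  · rw [if_pos h]
    have hroot : IsRoot ((X : F[X]) ^ m - 1) α := by
      simp [IsRoot, sub_eq_zero, h]
    have h1 : 1 ≤ rootMultiplicity α ((X : F[X]) ^ m - 1) :=
      (rootMultiplicity_pos hne).mpr hroot
    have hsq : Squarefree ((X : F[X]) ^ m - 1) := by
      have hmF : (m : F) ≠ 0 := by
        rw [Ne, CharP.cast_eq_zero_iff F 2 m]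
        have := Nat.odd_iff.mp hm
        omega
      have := Polynomial.separable_X_pow_sub_C (1 : F) hmF one_ne_zero
      simpa using this.squarefree
    have h2 : rootMultiplicity α ((X : F[X]) ^ m - 1) ≤ 1 := by
      by_contra hgt
      push_neg at hgt
      have hdvd : (X - C α) ^ 2 ∣ (X : F[X]) ^ m - 1 :=
        (le_rootMultiplicity_iff hne).mp hgt
      have := hsq (X - C α) (by rwa [← sq])
      exact (Polynomial.not_isUnit_X_sub_C α) this
    omega
  · rw [if_neg h]
    apply rootMultiplicity_eq_zero
    simp [IsRoot, sub_eq_zero, h]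

private lemma rm_pow_sub_one {F : Type*} [Field F] [CharP F 2] (α : F) {e m : ℕ} (hm : Odd m) :
    rootMultiplicity α ((X : F[X]) ^ (2 ^ e * m) - 1) = if α ^ m = 1 then 2 ^ e else 0 := by
  have hne : (X : F[X]) ^ m - 1 ≠ 0 := by
    simpa using X_pow_sub_C_ne_zero hm.pos (1 : F)
  rw [← frob_pow, rm_pow hne, rm_odd α hm]
  split <;> simp

private lemma filter_eq_image (N : ℕ) (a : ℤ) (m : ℕ) (hm : 0 < m) (hdvd : m ∣ N) :
    (Finset.range N).filter (fun x : ℕ => (m : ℤ) ∣ (x : ℤ) - a) =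
      (Finset.range (N / m)).image (fun j => (a % (m : ℤ)).toNat + j * m) := by
  have hm' : (0 : ℤ) < m := by exact_mod_cast hm
  have hb0 : (0 : ℤ) ≤ a % m := Int.emod_nonneg a (by positivity)
  have hblt : a % m < m := Int.emod_lt_of_pos a hm'
  have hbcast : (((a % (m : ℤ)).toNat : ℤ)) = a % m := Int.toNat_of_nonneg hb0
  set b : ℕ := (a % (m : ℤ)).toNat with hbdef
  have hbm : b < m := by
    have : (b : ℤ) < m := hbcast ▸ hblt
    exact_mod_cast this
  ext x
  simp only [Finset.mem_filter, Finset.mem_range, Finset.mem_image]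
  constructor
  · rintro ⟨hxN, hdx⟩
    have hmod : a % (m : ℤ) = (x : ℤ) % m := Int.ModEq.eq (Int.modEq_iff_dvd.mpr hdx)
    have hxm : x % m = b := by
      have : ((x % m : ℕ) : ℤ) = (b : ℤ) := by
        push_cast
        rw [← hmod, hbcast]
      exact_mod_cast this
    refine ⟨x / m, ?_, ?_⟩
    · exact Nat.div_lt_div_of_lt_of_dvd hdvd hxN
    · have h1 : x % m + x / m * m = x := Nat.mod_add_div' x m
      omega
  · rintro ⟨j, hj, rfl⟩
    constructor
    · have h1 : (j + 1) * m ≤ N := by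
        rw [← Nat.le_div_iff_mul_le hm]
        omega
      nlinarith [hbm]
    · refine ⟨(j : ℤ) - a / m, ?_⟩
      push_cast
      rw [hbcast, Int.emod_def]
      ring

private lemma count_ident {K : Type*} [Field K] [CharP K 2] (k : ℕ) (a : Fin k → ℤ)
    (n : Fin k → ℕ) (hpos : ∀ s, 0 < n s) (N : ℕ) (hdvd : ∀ s, n s ∣ N)
    (hodd : ∀ x : ℤ, Odd ((Finset.univ.filter (fun s => (n s : ℤ) ∣ x - a s)).card)) :
    ∑ x ∈ Finset.range N, (X : K[X]) ^ x =
      ∑ s : Fin k, (X : K[X]) ^ ((a s % (n s : ℤ)).toNat) *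
        ∑ j ∈ Finset.range (N / n s), ((X : K[X]) ^ (n s)) ^ j := by
  have step1 : ∀ x : ℕ, (X : K[X]) ^ x =
      ∑ s : Fin k, if (n s : ℤ) ∣ (x : ℤ) - a s then (X : K[X]) ^ x else 0 := by
    intro x
    rw [← Finset.sum_filter, Finset.sum_const]
    obtain ⟨r, hr⟩ := hodd (x : ℤ)
    rw [hr, nsmul_eq_mul]
    have h2 : (2 : K[X]) = 0 := by
      have : ((2 : ℕ) : K[X]) = 0 := CharP.cast_eq_zero K[X] 2
      simpa using this
    push_cast
    rw [h2]
    ring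
  calc ∑ x ∈ Finset.range N, (X : K[X]) ^ x
      = ∑ x ∈ Finset.range N, ∑ s : Fin k,
          (if (n s : ℤ) ∣ (x : ℤ) - a s then (X : K[X]) ^ x else 0) := by
        exact Finset.sum_congr rfl fun x _ => step1 x
    _ = ∑ s : Fin k, ∑ x ∈ Finset.range N,
          (if (n s : ℤ) ∣ (x : ℤ) - a s then (X : K[X]) ^ x else 0) := Finset.sum_comm
    _ = ∑ s : Fin k, ∑ x ∈ (Finset.range N).filter
          (fun x : ℕ => (n s : ℤ) ∣ (x : ℤ) - a s), (X : K[X]) ^ x := by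
        exact Finset.sum_congr rfl fun s _ => (Finset.sum_filter _ _).symm
    _ = ∑ s : Fin k, ∑ j ∈ Finset.range (N / n s),
          (X : K[X]) ^ ((a s % (n s : ℤ)).toNat + j * n s) := by
        refine Finset.sum_congr rfl fun s _ => ?_
        rw [filter_eq_image N (a s) (n s) (hpos s) (hdvd s)]
        rw [Finset.sum_image]
        intro j _ j' _ h
        have h' : j * n s = j' * n s := by
          have h2 : (a s % (n s : ℤ)).toNat + j * n s = (a s % (n s : ℤ)).toNat + j' * n s := h
          omega
        exact Nat.eq_of_mul_eq_mul_right (hpos s) h'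
    _ = ∑ s : Fin k, (X : K[X]) ^ ((a s % (n s : ℤ)).toNat) *
        ∑ j ∈ Finset.range (N / n s), ((X : K[X]) ^ (n s)) ^ j := by
        refine Finset.sum_congr rfl fun s _ => ?_
        rw [Finset.mul_sum]
        exact Finset.sum_congr rfl fun j _ => by rw [pow_add, ← pow_mul, mul_comm (n s) j]

/-- **Sun.** A covering system `{a_s (mod n_s)}_{s=1}^k` with
`1 < n_1 < ⋯ < n_k` cannot cover every integer an odd number of times: some
integer `x` is covered by an even number of the residue classes. -/
theorem covering_not_always_odd_multiplicity
    (k : ℕ) (a : Fin k → ℤ) (n : Fin k → ℕ)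
    (hone : ∀ s, 1 < n s)
    (hmono : StrictMono n)
    (hcov : ∀ x : ℤ, ∃ s, (n s : ℤ) ∣ x - a s) :
    ∃ x : ℤ, Even (Finset.univ.filter (fun s => (n s : ℤ) ∣ x - a s)).card := by
  by_contra hcon
  push_neg at hcon
  have hodd : ∀ x : ℤ, Odd ((Finset.univ.filter (fun s => (n s : ℤ) ∣ x - a s)).card) :=
    fun x => Nat.not_even_iff_odd.mp (hcon x)
  have hk : 0 < k := by
    rcases Nat.eq_zero_or_pos k with h | h
    · subst h; simpa using hodd 0
    · exact h
  have hpos : ∀ s, 0 < n s := fun s => lt_trans one_pos (hone s)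
  -- the largest index
  set last : Fin k := ⟨k - 1, by omega⟩ with hlastdef
  have hlt_last : ∀ s, s ≠ last → n s < n last := by
    intro s hs
    apply hmono
    rw [Fin.lt_def]
    have h1 : s.val < k := s.isLt
    have h2 : s.val ≠ k - 1 := fun h => hs (Fin.ext h)
    simp only [hlastdef]
    omega
  -- 2-adic decompositions
  set E : Fin k → ℕ := fun s => (n s).factorization 2 with hEdef
  set M : Fin k → ℕ := fun s => n s / 2 ^ E s with hMdef
  have hEM : ∀ s, 2 ^ E s * M s = n s := fun s =>
    Nat.ordProj_mul_ordCompl_eq_self (n s) 2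
  have hModd : ∀ s, Odd (M s) := by
    intro s
    have h2 : ¬ 2 ∣ M s := Nat.not_dvd_ordCompl Nat.prime_two (hpos s).ne'
    rw [Nat.odd_iff]
    omega
  set e : ℕ := E last with hedef
  set d : ℕ := M last with hddef
  have hdodd : Odd d := hModd last
  have hdpos : 0 < d := hdodd.pos
  -- common multiple
  set N : ℕ := ∏ s : Fin k, n s with hNdef
  have hNpos : 0 < N := Finset.prod_pos fun s _ => hpos s
  have hdvdN : ∀ s, n s ∣ N := fun s => Finset.dvd_prod_of_mem n (Finset.mem_univ s)
  set v : ℕ := N.factorization 2 with hvdef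
  set N' : ℕ := N / 2 ^ v with hN'def
  have hvN : 2 ^ v * N' = N := Nat.ordProj_mul_ordCompl_eq_self N 2
  have hN'odd : Odd N' := by
    have h2 : ¬ 2 ∣ N' := Nat.not_dvd_ordCompl Nat.prime_two hNpos.ne'
    rw [Nat.odd_iff]
    omega
  -- the field and the primitive root
  set K : Type := AlgebraicClosure (ZMod 2) with hKdef
  haveI : CharP K 2 := by unfold K; infer_instance
  haveI : NeZero ((d : ℕ) : K) := ⟨by
    rw [Ne, CharP.cast_eq_zero_iff K 2 d]
    have := Nat.odd_iff.mp hdodd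
    omega⟩
  obtain ⟨α, hα⟩ := HasEnoughRootsOfUnity.exists_primitiveRoot K d
  have hαd : α ^ d = 1 := hα.pow_eq_one
  have hαne0 : α ≠ 0 := hα.ne_zero hdpos.ne'
  -- the polynomial identity
  set b : Fin k → ℕ := fun s => (a s % (n s : ℤ)).toNat with hbdef
  set G : Fin k → K[X] := fun s => ∑ j ∈ Finset.range (N / n s), ((X : K[X]) ^ (n s)) ^ j
    with hGdef
  set P : K[X] := ∑ s : Fin k, (X : K[X]) ^ (b s) * G s with hPdef
  have hident : ∑ x ∈ Finset.range N, (X : K[X]) ^ x = P :=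
    count_ident k a n hpos N hdvdN hodd
  have hmain : (X : K[X]) ^ N - 1 = P * ((X : K[X]) - 1) := by
    rw [← hident, geom_sum_mul]
  have hXNne : (X : K[X]) ^ N - 1 ≠ 0 := by
    simpa using X_pow_sub_C_ne_zero hNpos (1 : K)
  have hXnne : ∀ s, (X : K[X]) ^ (n s) - 1 ≠ 0 := fun s => by
    simpa using X_pow_sub_C_ne_zero (hpos s) (1 : K)
  have hGmul : ∀ s, G s * ((X : K[X]) ^ (n s) - 1) = (X : K[X]) ^ N - 1 := by
    intro s
    rw [hGdef]
    rw [geom_sum_mul ((X : K[X]) ^ (n s)) (N / n s), ← pow_mul,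
      Nat.mul_div_cancel' (hdvdN s)]
  have hGne : ∀ s, G s ≠ 0 := by
    intro s hG0
    exact hXNne (by rw [← hGmul s, hG0, zero_mul])
  -- root multiplicities
  have hrmN : rootMultiplicity α ((X : K[X]) ^ N - 1) = 2 ^ v := by
    have hdN' : d ∣ N' := by
      have hdN : d ∣ N := dvd_trans ⟨2 ^ e, by rw [← hEM last, mul_comm]⟩ (hdvdN last)
      have hcop : Nat.Coprime d (2 ^ v) := by
        apply Nat.Coprime.pow_right
        exact Nat.coprime_two_right.mpr hdodd
      have hdN2 : d ∣ 2 ^ v * N' := by rw [hvN]; exact hdN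
      exact hcop.dvd_of_dvd_mul_left hdN2
    obtain ⟨c, hc⟩ := hdN'
    have hαN' : α ^ N' = 1 := by rw [hc, pow_mul, hαd, one_pow]
    rw [← hvN, rm_pow_sub_one α hN'odd, if_pos hαN']
  have hrmn : ∀ s, rootMultiplicity α ((X : K[X]) ^ (n s) - 1)
      = if α ^ (M s) = 1 then 2 ^ (E s) else 0 := by
    intro s
    rw [← hEM s]
    exact rm_pow_sub_one α (hModd s)
  have hrmG : ∀ s, rootMultiplicity α (G s)
      + rootMultiplicity α ((X : K[X]) ^ (n s) - 1) = 2 ^ v := by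
    intro s
    rw [← rootMultiplicity_mul (by rw [hGmul s]; exact hXNne), hGmul s, hrmN]
  -- multiplicity of G last
  set t : ℕ := rootMultiplicity α (G last) with htdef
  have ht : t + 2 ^ e = 2 ^ v := by
    have h := hrmG last
    rw [hrmn last, ← hddef, ← hedef, if_pos hαd] at h
    exact h
  have hbound : ∀ s, s ≠ last → rootMultiplicity α ((X : K[X]) ^ (n s) - 1) + 1 ≤ 2 ^ e := by
    intro s hs
    rw [hrmn s]
    split_ifs with hMs
    · have hdMs : d ∣ M s := (hα.pow_eq_one_iff_dvd (M s)).mp hMs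
      have hle : 2 ^ E s * d ≤ n s := by
        calc 2 ^ E s * d ≤ 2 ^ E s * M s :=
              Nat.mul_le_mul_left _ (Nat.le_of_dvd (hModd s).pos hdMs)
          _ = n s := hEM s
      have hlt : 2 ^ E s * d < 2 ^ e * d := by
        calc 2 ^ E s * d ≤ n s := hle
          _ < n last := hlt_last s hs
          _ = 2 ^ e * d := by rw [hedef, hddef, hEM last]
      have : 2 ^ E s < 2 ^ e := Nat.lt_of_mul_lt_mul_right hlt
      omega
    · have : 0 < 2 ^ e := pow_pos (by norm_num) e
      omega
  have htermne : ∀ s, (X : K[X]) ^ (b s) * G s ≠ 0 := fun s =>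
    mul_ne_zero (pow_ne_zero _ X_ne_zero) (hGne s)
  have hterm : ∀ s, rootMultiplicity α ((X : K[X]) ^ (b s) * G s)
      = rootMultiplicity α (G s) := by
    intro s
    rw [rootMultiplicity_mul (htermne s)]
    have h0 : rootMultiplicity α ((X : K[X]) ^ (b s)) = 0 := by
      apply rootMultiplicity_eq_zero
      simp only [IsRoot, eval_pow, eval_X]
      exact pow_ne_zero _ hαne0
    rw [h0, zero_add]
  have hPne : P ≠ 0 := fun h0 => hXNne (by rw [hmain, h0, zero_mul])
  have hPle : rootMultiplicity α P ≤ t := by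
    rw [rootMultiplicity_le_iff hPne]
    intro hdvdP
    have hrest : ((X : K[X]) - C α) ^ (t + 1) ∣
        ∑ s ∈ Finset.univ.erase last, (X : K[X]) ^ (b s) * G s := by
      apply Finset.dvd_sum
      intro s hs
      have hs' : s ≠ last := (Finset.mem_erase.mp hs).1
      have h1 : t + 1 ≤ rootMultiplicity α ((X : K[X]) ^ (b s) * G s) := by
        rw [hterm s]
        have h2 := hrmG s
        have h3 := hbound s hs'
        omega
      exact dvd_trans (pow_dvd_pow _ h1) (pow_rootMultiplicity_dvd _ α)
    have hsplitP : (X : K[X]) ^ (b last) * G last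
        = P - ∑ s ∈ Finset.univ.erase last, (X : K[X]) ^ (b s) * G s := by
      rw [hPdef, ← Finset.add_sum_erase _ _ (Finset.mem_univ last)]
      ring
    have hdvdlast : ((X : K[X]) - C α) ^ (t + 1) ∣ (X : K[X]) ^ (b last) * G last := by
      rw [hsplitP]; exact dvd_sub hdvdP hrest
    have hle : t + 1 ≤ rootMultiplicity α ((X : K[X]) ^ (b last) * G last) :=
      (le_rootMultiplicity_iff (htermne last)).mpr hdvdlast
    rw [hterm last] at hle
    omega
  have hεle : rootMultiplicity α ((X : K[X]) - 1) ≤ 1 ∧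
      (rootMultiplicity α ((X : K[X]) - 1) = 1 → α = 1) := by
    have hC : ((X : K[X]) - 1) = X - C 1 := by rw [C_1]
    rw [hC, rootMultiplicity_X_sub_C]
    split_ifs with h
    · exact ⟨le_refl 1, fun _ => h⟩
    · exact ⟨zero_le_one, fun h1 => absurd h1 (by norm_num)⟩
  have hfin : 2 ^ v = rootMultiplicity α P + rootMultiplicity α ((X : K[X]) - 1) := by
    rw [← hrmN, hmain, rootMultiplicity_mul (by rw [← hmain]; exact hXNne)]
  obtain ⟨hε1, hεim⟩ := hεle
  have h2e : 0 < 2 ^ e := pow_pos (by norm_num) e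
  have hcase : rootMultiplicity α ((X : K[X]) - 1) = 1 := by omega
  have hα1 : α = 1 := hεim hcase
  have hd1 : d = 1 := Nat.dvd_one.mp ((hα.pow_eq_one_iff_dvd 1).mp (by rw [hα1, one_pow]))
  have h2e1 : 2 ^ e ≤ 1 := by omega
  have hnlast : n last = 2 ^ e * d := (hEM last).symm
  rw [hd1, mul_one] at hnlast
  have hgt := hone last
  omega
end
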